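/- Let X = ℝ^d equipped with a norm that is strictly convex, with dual X*. Let (μ_n)_{n∈ℕ} and μ be Borel probability measures on X with μ_n → μ weakly. Assume that for every u ∈ X* with ‖u‖_{X*} < 1 the u-geometric quantile of μ is unique; denote it y*_u. For each n and each u with ‖u‖_{X*} < 1, let y*_{n,u} be any u-geometric quantile of μ_n. Then: (a) for every ε > 0, sup_{‖u‖_{X*} ≤ 1−ε} ‖y*_{n,u} − y*_u‖ → 0 as n → ∞; (b) if moreover μ is atomless, then for any sequence c_n → 0 and any v ∈ X* with ‖v‖_{X*} < 1, sup_{‖u − v‖_{X*} ≤ c_n} ‖y*_{n,u} − y*_v‖ → 0 as n → ∞. -/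

import Mathlib

open MeasureTheory Filter

open Metric

/-- The geometric-quantile objective of a measure `μ`:
`f(y) = ∫ (‖y − x‖ − ‖x‖) dμ(x) − u(y)`. -/
noncomputable def gqObj {X : Type*} [NormedAddCommGroup X] [NormedSpace ℝ X]
    [MeasurableSpace X] (μ : Measure X) (u : X →L[ℝ] ℝ) (y : X) : ℝ :=
  (∫ x, (‖y - x‖ - ‖x‖) ∂μ) - u y

section aux
variable {X : Type*} [NormedAddCommGroup X] [NormedSpace ℝ X]
    [MeasurableSpace X] [OpensMeasurableSpace X]

/-- The integrand as a bounded continuous function. -/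
noncomputable def hbc (y : X) : BoundedContinuousFunction X ℝ :=
  BoundedContinuousFunction.ofNormedAddCommGroup (fun x => ‖y - x‖ - ‖x‖)
    (by fun_prop) ‖y‖ (fun x => by
      rw [Real.norm_eq_abs, abs_sub_le_iff]
      constructor
      · have := norm_sub_le y x; linarith
      · have : ‖x‖ ≤ ‖y - x‖ + ‖y‖ := by
          have := norm_sub_le (y - x) y; simp at this; linarith [norm_sub_rev (y-x) y, norm_sub_le (x - y) (-y)]
        linarith)

@[simp] lemma hbc_apply (y x : X) : hbc y x = ‖y - x‖ - ‖x‖ := rfl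

lemma gqObj_eq (ν : Measure X) (u : X →L[ℝ] ℝ) (y : X) :
    gqObj ν u y = (∫ x, hbc y x ∂ν) - u y := rfl

lemma gqObj_zero (ν : Measure X) (u : X →L[ℝ] ℝ) : gqObj ν u 0 = 0 := by
  simp [gqObj]

lemma hbc_integrable (ν : Measure X) [IsFiniteMeasure ν] (y : X) :
    Integrable (fun x => ‖y - x‖ - ‖x‖) ν := by
  exact (hbc y).integrable ν

lemma integral_hbc_dist (ν : Measure X) [IsProbabilityMeasure ν] (y y' : X) :
    ‖(∫ x, hbc y x ∂ν) - ∫ x, hbc y' x ∂ν‖ ≤ ‖y - y'‖ := by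
  rw [← integral_sub ((hbc y).integrable ν) ((hbc y').integrable ν)]
  have := norm_integral_le_of_norm_le_const (μ := ν)
    (f := fun x => hbc y x - hbc y' x) (C := ‖y - y'‖) ?_
  · simpa using this
  · filter_upwards with x
    simp only [hbc_apply]
    have h := abs_norm_sub_norm_le (y - x) (y' - x)
    have he : y - x - (y' - x) = y - y' := by abel
    rw [he] at h
    rw [Real.norm_eq_abs]
    calc |‖y - x‖ - ‖x‖ - (‖y' - x‖ - ‖x‖)| = |‖y - x‖ - ‖y' - x‖| := by ring_nf
      _ ≤ ‖y - y'‖ := h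
end aux

section two
variable {X : Type*} [NormedAddCommGroup X] [NormedSpace ℝ X]
    [MeasurableSpace X] [OpensMeasurableSpace X]

lemma tendsto_gq {ν : ℕ → Measure X} [∀ k, IsProbabilityMeasure (ν k)]
    {μ' : Measure X} [IsProbabilityMeasure μ']
    (hν : ∀ g : BoundedContinuousFunction X ℝ,
      Tendsto (fun k => ∫ x, g x ∂(ν k)) atTop (nhds (∫ x, g x ∂μ')))
    {u : ℕ → X →L[ℝ] ℝ} {u₀ : X →L[ℝ] ℝ} (hu : Tendsto u atTop (nhds u₀))
    {w : ℕ → X} {w₀ : X} (hw : Tendsto w atTop (nhds w₀)) :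
    Tendsto (fun k => gqObj (ν k) (u k) (w k)) atTop (nhds (gqObj μ' u₀ w₀)) := by
  simp only [gqObj_eq]
  apply Tendsto.sub
  · -- integrals
    have hB : Tendsto (fun k => ∫ x, hbc w₀ x ∂(ν k)) atTop (nhds (∫ x, hbc w₀ x ∂μ')) :=
      hν (hbc w₀)
    have hAB : Tendsto (fun k => (∫ x, hbc (w k) x ∂(ν k)) - ∫ x, hbc w₀ x ∂(ν k))
        atTop (nhds 0) := by
      apply squeeze_zero_norm (fun k => integral_hbc_dist (ν k) (w k) w₀)
      simpa using (tendsto_iff_norm_sub_tendsto_zero.mp hw)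
    have := hAB.add hB
    simpa using this
  · -- u k (w k) → u₀ w₀
    have hp : Tendsto (fun k => (u k, w k)) atTop (nhds (u₀, w₀)) := hu.prodMk_nhds hw
    exact (isBoundedBilinearMap_apply.continuous.tendsto (u₀, w₀)).comp hp

lemma limit_min {ν : ℕ → Measure X} [∀ k, IsProbabilityMeasure (ν k)]
    {μ' : Measure X} [IsProbabilityMeasure μ']
    (hν : ∀ g : BoundedContinuousFunction X ℝ,
      Tendsto (fun k => ∫ x, g x ∂(ν k)) atTop (nhds (∫ x, g x ∂μ')))
    {u : ℕ → X →L[ℝ] ℝ} {u₀ : X →L[ℝ] ℝ} (hu : Tendsto u atTop (nhds u₀))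
    {w : ℕ → X} {w₀ : X} (hw : Tendsto w atTop (nhds w₀))
    (hmin : ∀ k (z : X), gqObj (ν k) (u k) (w k) ≤ gqObj (ν k) (u k) z) :
    ∀ z : X, gqObj μ' u₀ w₀ ≤ gqObj μ' u₀ z := fun z =>
  le_of_tendsto_of_tendsto' (tendsto_gq hν hu hw)
    (tendsto_gq hν hu tendsto_const_nhds) (fun k => hmin k z)
end two

section three
variable {X : Type*} [NormedAddCommGroup X] [NormedSpace ℝ X]
    [MeasurableSpace X] [OpensMeasurableSpace X]

lemma gq_coercive (ν : Measure X) [IsProbabilityMeasure ν] {u : X →L[ℝ] ℝ} {ε R : ℝ}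
    (hε : 0 < ε) (hu : ‖u‖ ≤ 1 - ε) (hR : 0 < R)
    (hν : 1 - ε/4 ≤ (ν (closedBall (0:X) R)).toReal)
    {y : X} (hy : 2*R ≤ ‖y‖) : ε/2 * ‖y‖ - 2*R ≤ gqObj ν u y := by
  set A : Set X := closedBall (0:X) R with hA
  have hAm : MeasurableSet A := measurableSet_closedBall
  have hint : Integrable (fun x => ‖y - x‖ - ‖x‖) ν := hbc_integrable ν y
  have hsplit : (∫ x, (‖y - x‖ - ‖x‖) ∂ν)
      = (∫ x in A, (‖y - x‖ - ‖x‖) ∂ν) + ∫ x in Aᶜ, (‖y - x‖ - ‖x‖) ∂ν :=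
    (integral_add_compl hAm hint).symm
  have ha : (ν A).toReal + (ν Aᶜ).toReal = 1 := by
    rw [← ENNReal.toReal_add (measure_ne_top _ _) (measure_ne_top _ _),
      measure_add_measure_compl hAm, measure_univ, ENNReal.toReal_one]
  have hb : (ν Aᶜ).toReal ≤ ε/4 := by linarith
  have h1 : (‖y‖ - 2*R) * (ν A).toReal ≤ ∫ x in A, (‖y - x‖ - ‖x‖) ∂ν := by
    apply setIntegral_ge_of_const_le_real hAm (measure_ne_top _ _) _ hint.integrableOn
    intro x hx
    have hxR : ‖x‖ ≤ R := by simpa [hA] using hx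
    have h2 : ‖y‖ - ‖x‖ ≤ ‖y - x‖ := norm_sub_norm_le y x
    linarith
  have h2 : (-‖y‖) * (ν Aᶜ).toReal ≤ ∫ x in Aᶜ, (‖y - x‖ - ‖x‖) ∂ν := by
    apply setIntegral_ge_of_const_le_real hAm.compl (measure_ne_top _ _) _ hint.integrableOn
    intro x _
    have h3 : ‖x‖ - ‖y‖ ≤ ‖y - x‖ := by
      have := norm_sub_norm_le x y
      rwa [norm_sub_rev] at this
    linarith
  have huy : u y ≤ (1 - ε) * ‖y‖ := by
    calc u y ≤ ‖u y‖ := le_abs_self _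
      _ ≤ ‖u‖ * ‖y‖ := u.le_opNorm y
      _ ≤ (1 - ε) * ‖y‖ := by
          apply mul_le_mul_of_nonneg_right hu (norm_nonneg _)
  have hy0 : (0:ℝ) ≤ ‖y‖ := norm_nonneg _
  have hA1 : (ν A).toReal ≤ 1 := by
    have := ha; linarith [ENNReal.toReal_nonneg (a := ν Aᶜ)]
  have hεle : ε ≤ 1 := by have := norm_nonneg u; linarith
  rw [gqObj]
  rw [hsplit]
  have hkey : (‖y‖ - 2*R) * (ν A).toReal + (-‖y‖) * (ν Aᶜ).toReal - u y
      ≥ ε/2 * ‖y‖ - 2*R := by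
    have hyR : 0 ≤ ‖y‖ - 2*R := by linarith
    have hAge : 1 - ε/4 ≤ (ν A).toReal := hν
    have hb0 : (0:ℝ) ≤ (ν Aᶜ).toReal := ENNReal.toReal_nonneg
    nlinarith [mul_le_mul_of_nonneg_left hb (le_of_lt (by linarith : (0:ℝ) < ‖y‖)),
      mul_le_mul_of_nonneg_left hAge hyR]
  linarith
end three

section four
variable {X : Type*} [NormedAddCommGroup X] [NormedSpace ℝ X]
    [MeasurableSpace X] [OpensMeasurableSpace X]

lemma min_bound (ν : Measure X) [IsProbabilityMeasure ν] {u : X →L[ℝ] ℝ} {ε R : ℝ}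
    (hε : 0 < ε) (hu : ‖u‖ ≤ 1 - ε) (hR : 0 < R)
    (hν : 1 - ε/4 ≤ (ν (closedBall (0:X) R)).toReal)
    {y₀ : X} (hmin : ∀ z : X, gqObj ν u y₀ ≤ gqObj ν u z) :
    ‖y₀‖ ≤ 2*R + 4*R/ε := by
  by_contra hcon
  push_neg at hcon
  have h2R : 2*R ≤ ‖y₀‖ := by
    have : 0 < 4*R/ε := by positivity
    linarith
  have h1 := gq_coercive ν hε hu hR hν h2R
  have h2 : gqObj ν u y₀ ≤ 0 := by
    have := hmin 0
    rwa [gqObj_zero] at this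
  have h3 : ε/2 * ‖y₀‖ - 2*R ≤ 0 := le_trans h1 h2
  have h4 : ε/2 * (2*R + 4*R/ε) < ε/2 * ‖y₀‖ :=
    mul_lt_mul_of_pos_left hcon (by positivity)
  have h5 : ε/2 * (4*R/ε) = 2*R := by field_simp; ring
  nlinarith
end four

section five
variable {X : Type*} [NormedAddCommGroup X] [NormedSpace ℝ X]
    [MeasurableSpace X] [OpensMeasurableSpace X]

lemma tight_lemma (μs : ℕ → Measure X) (μ : Measure X)
    [∀ n, IsProbabilityMeasure (μs n)] [IsProbabilityMeasure μ]
    (hconv : ∀ g : BoundedContinuousFunction X ℝ,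
      Tendsto (fun n => ∫ x, g x ∂(μs n)) atTop (nhds (∫ x, g x ∂μ)))
    {η : ℝ} (hη : 0 < η) :
    ∃ R : ℝ, 0 < R ∧ (1 - η ≤ (μ (closedBall (0:X) R)).toReal) ∧
      ∀ᶠ n in atTop, 1 - η ≤ ((μs n) (closedBall (0:X) R)).toReal := by
  -- Step 1: find R₀ with μ (closedBall 0 R₀) ≥ 1 - η/2
  have hmono : Monotone (fun n : ℕ => closedBall (0:X) n) := fun a b hab =>
    closedBall_subset_closedBall (by exact_mod_cast hab)
  have hU : (⋃ n : ℕ, closedBall (0:X) n) = Set.univ := by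
    ext x
    simp only [Set.mem_iUnion, mem_closedBall, dist_zero_right, Set.mem_univ, iff_true]
    exact ⟨⌈‖x‖⌉₊, Nat.le_ceil _⟩
  have htend : Tendsto (fun n : ℕ => μ (closedBall (0:X) n)) atTop (nhds 1) := by
    have := tendsto_measure_iUnion_atTop (μ := μ) hmono
    rwa [hU, measure_univ] at this
  have htendR : Tendsto (fun n : ℕ => (μ (closedBall (0:X) n)).toReal) atTop (nhds 1) := by
    have h1 : (1 : ENNReal) ≠ ⊤ := by simp
    simpa [Function.comp_def] using (ENNReal.tendsto_toReal h1).comp htend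
  have hev : ∀ᶠ n : ℕ in atTop, 1 - η/2 < (μ (closedBall (0:X) n)).toReal :=
    htendR.eventually (eventually_gt_nhds (by linarith))
  obtain ⟨m, hm⟩ := hev.exists
  set R₀ : ℝ := max (m : ℝ) 1 with hR₀def
  have hR₀pos : 0 < R₀ := lt_of_lt_of_le one_pos (le_max_right _ _)
  have hμR₀ : 1 - η/2 ≤ (μ (closedBall (0:X) R₀)).toReal := by
    refine le_trans hm.le (ENNReal.toReal_mono (measure_ne_top _ _) ?_)
    exact measure_mono (closedBall_subset_closedBall (le_max_left _ _))
  -- Step 2: bump function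
  set f : X → ℝ := fun x => max 0 (min 1 (2 - ‖x‖/R₀)) with hfdef
  have hf0 : ∀ x, 0 ≤ f x := fun x => le_max_left _ _
  have hf1 : ∀ x, f x ≤ 1 := fun x => max_le one_pos.le (min_le_left _ _)
  have hfball : ∀ x : X, ‖x‖ ≤ R₀ → f x = 1 := by
    intro x hx
    have h1 : ‖x‖/R₀ ≤ 1 := by rw [div_le_one hR₀pos]; exact hx
    have : (1:ℝ) ≤ 2 - ‖x‖/R₀ := by linarith
    simp [hfdef, min_eq_left this, max_eq_right (le_of_lt one_pos)]
  have hfout : ∀ x : X, ¬(‖x‖ ≤ 2*R₀) → f x = 0 := by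
    intro x hx
    push_neg at hx
    have h1 : (2:ℝ) < ‖x‖/R₀ := by rw [lt_div_iff₀ hR₀pos]; linarith
    have h2 : 2 - ‖x‖/R₀ ≤ 0 := by linarith
    have h3 : 2 - ‖x‖/R₀ ≤ 1 := by linarith
    simp [hfdef, min_eq_right h3, max_eq_left h2]
  have hfcont : Continuous f := by
    apply Continuous.max continuous_const
    exact Continuous.min continuous_const (by fun_prop)
  set g : BoundedContinuousFunction X ℝ :=
    BoundedContinuousFunction.ofNormedAddCommGroup f hfcont 1 (fun x => by
      rw [Real.norm_eq_abs, abs_le]; exact ⟨by linarith [hf0 x], hf1 x⟩) with hgdef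
  have hgapp : ∀ x, g x = f x := fun x => rfl
  -- ∫ g dμ ≥ μ (ball R₀)
  have hgint : ∀ (ν : Measure X) [IsProbabilityMeasure ν], Integrable f ν := by
    intro ν _; exact g.integrable ν
  have hlow : (μ (closedBall (0:X) R₀)).toReal ≤ ∫ x, g x ∂μ := by
    have h1 : ∫ x in closedBall (0:X) R₀, f x ∂μ ≤ ∫ x, f x ∂μ :=
      setIntegral_le_integral (hgint μ) (Filter.Eventually.of_forall hf0)
    have h2 : ∫ x in closedBall (0:X) R₀, f x ∂μ
        = (μ (closedBall (0:X) R₀)).toReal := by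
      rw [setIntegral_congr_fun measurableSet_closedBall
        (fun x hx => hfball x (by simpa using hx))]
      simp [Measure.real]
    calc (μ (closedBall (0:X) R₀)).toReal = _ := h2.symm
      _ ≤ ∫ x, f x ∂μ := h1
  -- ∫ g dν ≤ ν (ball 2R₀)
  have hupp : ∀ (ν : Measure X) [IsProbabilityMeasure ν],
      (∫ x, g x ∂ν) ≤ (ν (closedBall (0:X) (2*R₀))).toReal := by
    intro ν _
    set B : Set X := closedBall (0:X) (2*R₀) with hBdef
    have hBm : MeasurableSet B := measurableSet_closedBall
    have hsplit : (∫ x, f x ∂ν) = (∫ x in B, f x ∂ν) + ∫ x in Bᶜ, f x ∂ν :=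
      (integral_add_compl hBm (hgint ν)).symm
    have hzero : (∫ x in Bᶜ, f x ∂ν) = 0 := by
      rw [setIntegral_congr_fun hBm.compl (fun x hx => hfout x (by
        simpa [hBdef] using hx))]
      simp
    have hle : (∫ x in B, f x ∂ν) ≤ ∫ x in B, (1:ℝ) ∂ν := by
      apply setIntegral_mono_on (hgint ν).integrableOn
        (integrableOn_const (measure_ne_top _ _)) hBm
      exact fun x _ => hf1 x
    have hone : (∫ x in B, (1:ℝ) ∂ν) = (ν B).toReal := by simp [Measure.real]
    calc (∫ x, g x ∂ν) = (∫ x in B, f x ∂ν) + ∫ x in Bᶜ, f x ∂ν := hsplit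
      _ = ∫ x in B, f x ∂ν := by rw [hzero, add_zero]
      _ ≤ (ν B).toReal := hone ▸ hle
  refine ⟨2*R₀, by positivity, ?_, ?_⟩
  · have : (μ (closedBall (0:X) R₀)).toReal ≤ (μ (closedBall (0:X) (2*R₀))).toReal :=
      ENNReal.toReal_mono (measure_ne_top _ _)
        (measure_mono (closedBall_subset_closedBall (by linarith)))
    linarith
  · have h1 : ∀ᶠ n in atTop, 1 - η < ∫ x, g x ∂(μs n) := by
      apply (hconv g).eventually (eventually_gt_nhds _)
      linarith
    filter_upwards [h1] with n hn
    exact le_trans hn.le (hupp (μs n))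
end five

/-- Uniform convergence of geometric quantiles of weakly convergent probability
measures on a finite-dimensional strictly convex normed space: (a) uniformly over
`‖u‖ ≤ 1 − ε`; (b) if `μ` is atomless, uniformly over shrinking balls `‖u − v‖ ≤ c n`. -/
theorem stmt18 {X : Type*} [NormedAddCommGroup X] [NormedSpace ℝ X]
    [FiniteDimensional ℝ X] [StrictConvexSpace ℝ X] [MeasurableSpace X] [BorelSpace X]
    (μs : ℕ → Measure X) (μ : Measure X)
    [∀ n, IsProbabilityMeasure (μs n)] [IsProbabilityMeasure μ]
    (hconv : ∀ g : BoundedContinuousFunction X ℝ,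
      Tendsto (fun n => ∫ x, g x ∂(μs n)) atTop (nhds (∫ x, g x ∂μ)))
    (ystar : (X →L[ℝ] ℝ) → X)
    (hstar : ∀ u : X →L[ℝ] ℝ, ‖u‖ < 1 →
      {y : X | ∀ z : X, gqObj μ u y ≤ gqObj μ u z} = {ystar u})
    (y : ℕ → (X →L[ℝ] ℝ) → X)
    (hy : ∀ (n : ℕ) (u : X →L[ℝ] ℝ), ‖u‖ < 1 →
      ∀ z : X, gqObj (μs n) u (y n u) ≤ gqObj (μs n) u z) :
    (∀ ε : ℝ, 0 < ε → ∀ δ : ℝ, 0 < δ → ∀ᶠ n in atTop,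
      ∀ u : X →L[ℝ] ℝ, ‖u‖ ≤ 1 - ε → ‖y n u - ystar u‖ < δ) ∧
    ((∀ a : X, μ {a} = 0) →
      ∀ v : X →L[ℝ] ℝ, ‖v‖ < 1 →
      ∀ c : ℕ → ℝ, Tendsto c atTop (nhds 0) →
      ∀ δ : ℝ, 0 < δ → ∀ᶠ n in atTop,
        ∀ u : X →L[ℝ] ℝ, ‖u‖ < 1 → ‖u - v‖ ≤ c n → ‖y n u - ystar v‖ < δ) := by
  have hystar_min : ∀ u : X →L[ℝ] ℝ, ‖u‖ < 1 →
      ∀ z : X, gqObj μ u (ystar u) ≤ gqObj μ u z := by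
    intro u hu
    have h : ystar u ∈ {y : X | ∀ z : X, gqObj μ u y ≤ gqObj μ u z} := by
      rw [hstar u hu]; exact Set.mem_singleton _
    exact h
  have huniq : ∀ u : X →L[ℝ] ℝ, ‖u‖ < 1 → ∀ w : X,
      (∀ z : X, gqObj μ u w ≤ gqObj μ u z) → w = ystar u := by
    intro u hu w hw
    have h : w ∈ {y : X | ∀ z : X, gqObj μ u y ≤ gqObj μ u z} := hw
    rwa [hstar u hu, Set.mem_singleton_iff] at h
  have key : ∀ ε : ℝ, 0 < ε → ∀ δ : ℝ, 0 < δ → ∀ᶠ n in atTop,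
      ∀ u : X →L[ℝ] ℝ, ‖u‖ ≤ 1 - ε → ‖y n u - ystar u‖ < δ := by
    intro ε hε δ hδ
    obtain ⟨R, hRpos, hμR, hμsR⟩ := tight_lemma μs μ hconv (show (0:ℝ) < ε/4 by linarith)
    set M := 2*R + 4*R/ε with hM
    by_contra hcon
    rw [Filter.not_eventually] at hcon
    have hfreq := hcon.and_eventually hμsR
    obtain ⟨φ, hφmono, hφ⟩ := extraction_of_frequently_atTop hfreq
    have hchoice : ∀ k, ∃ u : X →L[ℝ] ℝ, ‖u‖ ≤ 1 - ε ∧ δ ≤ ‖y (φ k) u - ystar u‖ := by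
      intro k
      have h := (hφ k).1
      push_neg at h
      obtain ⟨u, h1, h2⟩ := h
      exact ⟨u, h1, h2⟩
    choose u hu1 hu2 using hchoice
    have hulan : ∀ k, ‖u k‖ < 1 := fun k => lt_of_le_of_lt (hu1 k) (by linarith)
    have hyM : ∀ k, ‖y (φ k) (u k)‖ ≤ M := by
      intro k
      exact min_bound (μs (φ k)) hε (hu1 k) hRpos (hφ k).2
        (fun z => hy (φ k) (u k) (hulan k) z)
    have hysM : ∀ k, ‖ystar (u k)‖ ≤ M := by
      intro k
      exact min_bound μ hε (hu1 k) hRpos hμR (hystar_min (u k) (hulan k))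
    obtain ⟨u₀, hu₀mem, ψ1, hψ1, hu₀⟩ :=
      (isCompact_closedBall (0 : X →L[ℝ] ℝ) (1-ε)).tendsto_subseq
        (x := u) (fun k => by simpa [mem_closedBall, dist_zero_right] using hu1 k)
    obtain ⟨w₀, _, ψ2, hψ2, hw₀⟩ := (isCompact_closedBall (0:X) M).tendsto_subseq
      (x := fun k => y (φ (ψ1 k)) (u (ψ1 k)))
      (fun k => by simpa [mem_closedBall, dist_zero_right] using hyM (ψ1 k))
    obtain ⟨y₀, _, ψ3, hψ3, hy₀⟩ := (isCompact_closedBall (0:X) M).tendsto_subseq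
      (x := fun k => ystar (u (ψ1 (ψ2 k))))
      (fun k => by simpa [mem_closedBall, dist_zero_right] using hysM (ψ1 (ψ2 k)))
    set σ : ℕ → ℕ := fun k => ψ1 (ψ2 (ψ3 k)) with hσ
    have hσu : Tendsto (fun k => u (σ k)) atTop (nhds u₀) :=
      hu₀.comp ((hψ2.comp hψ3).tendsto_atTop)
    have hσw : Tendsto (fun k => y (φ (σ k)) (u (σ k))) atTop (nhds w₀) :=
      hw₀.comp hψ3.tendsto_atTop
    have hσy : Tendsto (fun k => ystar (u (σ k))) atTop (nhds y₀) := hy₀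
    have hu₀norm : ‖u₀‖ < 1 := by
      have : ‖u₀‖ ≤ 1 - ε := by simpa [mem_closedBall, dist_zero_right] using hu₀mem
      linarith
    have hνconv : ∀ g : BoundedContinuousFunction X ℝ,
        Tendsto (fun k => ∫ x, g x ∂(μs (φ (σ k)))) atTop (nhds (∫ x, g x ∂μ)) :=
      fun g => (hconv g).comp
        ((hφmono.comp ((hψ1.comp hψ2).comp hψ3)).tendsto_atTop)
    have hmin1 := limit_min hνconv hσu hσw
      (fun k z => hy (φ (σ k)) (u (σ k)) (hulan (σ k)) z)
    have hw₀eq : w₀ = ystar u₀ := huniq u₀ hu₀norm w₀ hmin1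
    have hmin2 := limit_min (ν := fun _ => μ) (μ' := μ)
      (fun g => tendsto_const_nhds) hσu hσy
      (fun k z => hystar_min (u (σ k)) (hulan (σ k)) z)
    have hy₀eq : y₀ = ystar u₀ := huniq u₀ hu₀norm y₀ hmin2
    have hlim : Tendsto (fun k => ‖y (φ (σ k)) (u (σ k)) - ystar (u (σ k))‖)
        atTop (nhds ‖w₀ - y₀‖) := (hσw.sub hσy).norm
    have hδ0 : δ ≤ ‖w₀ - y₀‖ :=
      ge_of_tendsto hlim (Eventually.of_forall fun k => hu2 (σ k))
    rw [hw₀eq, hy₀eq, sub_self, norm_zero] at hδ0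
    linarith
  refine ⟨key, ?_⟩
  intro _hatom v hv c hc δ hδ
  set ε : ℝ := (1 - ‖v‖)/2 with hεdef
  have hε : 0 < ε := by
    have := hv; simp only [hεdef]; linarith
  have hvε : ‖v‖ = 1 - 2*ε := by simp only [hεdef]; ring
  -- continuity of ystar at v
  have hcont : ∃ r : ℝ, 0 < r ∧ ∀ u : X →L[ℝ] ℝ, ‖u - v‖ ≤ r → ‖u‖ ≤ 1 - ε →
      ‖ystar u - ystar v‖ < δ/2 := by
    by_contra hcc
    push_neg at hcc
    have hsel : ∀ k : ℕ, ∃ u : X →L[ℝ] ℝ, ‖u - v‖ ≤ 1/(k+1) ∧ ‖u‖ ≤ 1 - ε ∧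
        δ/2 ≤ ‖ystar u - ystar v‖ := by
      intro k
      obtain ⟨u, h1, h2, h3⟩ := hcc (1/(k+1)) (by positivity)
      exact ⟨u, h1, h2, h3⟩
    choose u hu1 hu2 hu3 using hsel
    have hulan : ∀ k, ‖u k‖ < 1 := fun k => lt_of_le_of_lt (hu2 k) (by linarith)
    have huv : Tendsto u atTop (nhds v) := by
      rw [tendsto_iff_norm_sub_tendsto_zero]
      apply squeeze_zero_norm (fun k => by simpa using hu1 k)
      simpa [one_div] using tendsto_one_div_add_atTop_nhds_zero_nat (𝕜 := ℝ)
    obtain ⟨R, hRpos, hμR, _⟩ := tight_lemma μs μ hconv (show (0:ℝ) < ε/4 by linarith)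
    set M := 2*R + 4*R/ε with hM
    have hysM : ∀ k, ‖ystar (u k)‖ ≤ M := fun k =>
      min_bound μ hε (hu2 k) hRpos hμR (hystar_min (u k) (hulan k))
    obtain ⟨y₀, _, ψ, hψ, hy₀⟩ := (isCompact_closedBall (0:X) M).tendsto_subseq
      (x := fun k => ystar (u k))
      (fun k => by simpa [mem_closedBall, dist_zero_right] using hysM k)
    have hσu : Tendsto (fun k => u (ψ k)) atTop (nhds v) := huv.comp hψ.tendsto_atTop
    have hmin := limit_min (ν := fun _ => μ) (μ' := μ)
      (fun g => tendsto_const_nhds) hσu hy₀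
      (fun k z => hystar_min (u (ψ k)) (hulan (ψ k)) z)
    have hy₀eq : y₀ = ystar v := huniq v hv y₀ hmin
    have hlim : Tendsto (fun k => ‖ystar (u (ψ k)) - ystar v‖) atTop
        (nhds ‖y₀ - ystar v‖) := (hy₀.sub tendsto_const_nhds).norm
    have hδ0 : δ/2 ≤ ‖y₀ - ystar v‖ :=
      ge_of_tendsto hlim (Eventually.of_forall fun k => hu3 (ψ k))
    rw [hy₀eq, sub_self, norm_zero] at hδ0
    linarith
  obtain ⟨r, hr, hcont⟩ := hcont
  have ha := key ε hε (δ/2) (by linarith)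
  have hcev : ∀ᶠ n in atTop, c n < min r (ε/2) :=
    hc.eventually (eventually_lt_nhds (lt_min hr (by linarith)))
  filter_upwards [ha, hcev] with n hn1 hn2
  intro w hw1 hw2
  have hwv : ‖w - v‖ ≤ min r (ε/2) := hw2.trans hn2.le
  have hwnorm : ‖w‖ ≤ 1 - ε := by
    have h1 : ‖w‖ ≤ ‖v‖ + ‖w - v‖ := by
      have := norm_add_le v (w - v); simpa using this
    have h2 : ‖w - v‖ ≤ ε/2 := hwv.trans (min_le_right _ _)
    rw [hvε] at h1; linarith
  have h3 : ‖y n w - ystar w‖ < δ/2 := hn1 w hwnorm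
  have h4 : ‖ystar w - ystar v‖ < δ/2 := hcont w (hwv.trans (min_le_left _ _)) hwnorm
  calc ‖y n w - ystar v‖ = ‖(y n w - ystar w) + (ystar w - ystar v)‖ := by abel_nf
    _ ≤ ‖y n w - ystar w‖ + ‖ystar w - ystar v‖ := norm_add_le _ _
    _ < δ := by linarith
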